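/- For every r ≥ 0, every element of 𝒞_{r+1} is obtained in a unique way by choosing m ≥ 0, a tuple (i₁, …, i_m) of non-negative integers with i₁ + ⋯ + i_m = r, and posetted trees (Γ₁,f₁) ∈ 𝒞_{i₁}, …, (Γ_m,f_m) ∈ 𝒞_{i_m}, and grafting, for each j = 1, …, m, the root of Γ_j at the j-th (from the left) leaf of Ω_m labelled b. In other words, this grafting construction defines a bijection from the disjoint union over m ≥ 0 and tuples (i₁,…,i_m) with ∑ i_j = r of the products 𝒞_{i₁} × ⋯ × 𝒞_{i_m} onto 𝒞_{r+1}. -/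

import Mathlib

/-- A (planar) binary rooted tree with leaves labelled by elements of `A`.
`node l r` has left subtree `l` and right subtree `r`. -/
inductive LTree (A : Type) : Type
  | leaf (a : A) : LTree A
  | node (l r : LTree A) : LTree A

namespace LTree

variable {A : Type}

/-- The list of leaf labels, from left to right. -/
def leafList : LTree A → List A
  | leaf a => [a]
  | node l r => leafList l ++ leafList r

/-- The number of leaves. -/
def numLeaves (t : LTree A) : ℕ := (leafList t).length

/-- The label of the rightmost leaf, i.e. of `m(root)`. -/
def rml : LTree A → A
  | leaf a => a
  | node _ r => rml r

/-- The length `d(v)` of the rightmost path from the root `v` to `m(v)`. -/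
def rdepth : LTree A → ℕ
  | leaf _ => 0
  | node _ r => rdepth r + 1

/-- Monotonicity of the leaf labelling `f : (L(Γ), ⪯) → A`:  for every subroot `v`
and every leaf `u → v` one has `f u ≤ f (m v)`.  (The subroots of `node l r` are the
root together with the subroots of `l` and the subroots of `r` other than the root of
`r`; the condition at the root of `r` is implied by the one at the root, since
`m(root) = m(root of r)`.) -/
def Mono [Preorder A] : LTree A → Prop
  | leaf _ => True
  | node l r => (∀ x ∈ leafList l ++ leafList r, x ≤ rml r) ∧ Mono l ∧ Mono r

mutual
  /-- The coefficient `b_{(Γ,f)} = ∏_{v ∈ R(Γ)} bn (d v) / t v` attached to a posetted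
  tree, for a sequence `bn` of scalars. -/
  def coeff {K : Type} [Field K] [DecidableEq A] (bn : ℕ → K) : LTree A → K
    | leaf _ => 1
    | node l r =>
        (bn (rdepth r + 1) / (((leafList l ++ leafList r).count (rml r) : ℕ) : K))
          * coeff bn l * coeffAux bn r
  /-- Product of `bn (d v) / t v` over the subroots of the tree other than its root. -/
  def coeffAux {K : Type} [Field K] [DecidableEq A] (bn : ℕ → K) : LTree A → K
    | leaf _ => 1
    | node l r => coeff bn l * coeffAux bn r
end

/-- The evaluation `Z_Γ(f)` of a leaf-labelled binary tree in a Lie algebra: take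
the bracket at every internal vertex. -/
def evalT {L : Type} [LieRing L] (g : A → L) : LTree A → L
  | leaf a => g a
  | node l r => ⁅evalT g l, evalT g r⁆

end LTree

/-- `bseq n = B_n / n!`, where `B_n` is the `n`-th Bernoulli number
(convention `B₁ = -1/2`). -/
noncomputable def bseq (n : ℕ) : ℚ := bernoulli n / n.factorial

section BCH

variable {L : Type} [LieRing L] [LieAlgebra ℚ L]

/-- `adn x n = ad(x)^n`. -/
def adn (x : L) (n : ℕ) : L → L := (fun y => ⁅x, y⁆)^[n]

/-- The summand `ad(a)^{p₁}ad(b)^{q₁}⋯ad(a)^{p_n}ad(b)^{q_n−1} b` of Dynkin's formula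
(reading `⋯ad(a)^{p_n−1} a` when `q_n = 0`). -/
def dynkinWord (a b : L) : List (ℕ × ℕ) → L
  | [] => 0
  | [(p, q)] => if q = 0 then adn a (p - 1) a else adn a p (adn b (q - 1) b)
  | (p, q) :: x :: l => adn a p (adn b q (dynkinWord a b (x :: l)))

/-- The coefficient `((-1)^{n-1}/n) ⬝ (1/(p₁!q₁!⋯p_n!q_n!))` of Dynkin's formula. -/
noncomputable def dynkinCoeff (pl : List (ℕ × ℕ)) : ℚ :=
  ((-1 : ℚ) ^ (pl.length - 1) / (pl.length : ℚ)) *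
    ((pl.map fun pq => ((pq.1.factorial * pq.2.factorial : ℕ) : ℚ)).prod)⁻¹

/-- The Baker–Campbell–Hausdorff product, defined by Dynkin's formula; on a nilpotent
Lie algebra all but finitely many summands vanish. -/
noncomputable def bch (a b : L) : L :=
  ∑ᶠ pl ∈ {pl : List (ℕ × ℕ) | pl ≠ [] ∧ ∀ pq ∈ pl, 0 < pq.1 + pq.2},
    dynkinCoeff pl • dynkinWord a b pl

end BCH

namespace LTree

/-- `AllRlm P t` holds iff every local rightmost leaf of `t` has its label satisfying
`P`.  (The local rightmost leaves of `node l r` are the rightmost leaf, of label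
`rml r`, together with the local rightmost leaves of `l` and of `r`; a single leaf lies
on no nontrivial rightmost branch.) -/
def AllRlm {A : Type} (P : A → Prop) : LTree A → Prop
  | leaf _ => True
  | node l r => P (rml r) ∧ AllRlm P l ∧ AllRlm P r

end LTree

/-- Grafting the trees of the list `l = [Γ₁, …, Γ_m]` at the `m` leaves labelled `b` of
the Bernoulli-type tree `Ω_m` (the right comb whose left leaves are labelled `b = 0` and
whose rightmost leaf is labelled `a = 1`): the `j`-th `b`-leaf of `Ω_m` is replaced by
`Γ_j`. -/
def graftOmega : List (LTree (Fin 2)) → LTree (Fin 2)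
  | [] => .leaf 1
  | g :: l => .node g (graftOmega l)

lemma rml_mem_leafList {A : Type} (t : LTree A) : t.rml ∈ t.leafList := by
  induction t with
  | leaf a => simp [LTree.rml, LTree.leafList]
  | node l r ihl ihr => simp [LTree.rml, LTree.leafList, ihr]

lemma rml_graftOmega (l : List (LTree (Fin 2))) : (graftOmega l).rml = 1 := by
  induction l with
  | nil => rfl
  | cons g t ih => simpa [graftOmega, LTree.rml] using ih

lemma count_graftOmega (l : List (LTree (Fin 2))) :
    ((graftOmega l).leafList).count (1 : Fin 2)
      = (l.map fun g => (LTree.leafList g).count (1 : Fin 2)).sum + 1 := by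
  induction l with
  | nil => rfl
  | cons g t ih =>
    simp [graftOmega, LTree.leafList, List.count_append, ih]
    ring

lemma graftOmega_injective : Function.Injective graftOmega := by
  intro l1
  induction l1 with
  | nil =>
    intro l2 h
    cases l2 with
    | nil => rfl
    | cons g t => simp [graftOmega] at h
  | cons g t ih =>
    intro l2 h
    cases l2 with
    | nil => simp [graftOmega] at h
    | cons g' t' =>
      simp only [graftOmega, LTree.node.injEq] at h
      rw [h.1, ih h.2]

lemma good_graftOmega (l : List (LTree (Fin 2)))
    (h : ∀ g ∈ l, LTree.Mono g ∧ LTree.AllRlm (· = (1 : Fin 2)) g) :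
    LTree.Mono (graftOmega l) ∧ LTree.AllRlm (· = (1 : Fin 2)) (graftOmega l) := by
  induction l with
  | nil => exact ⟨trivial, trivial⟩
  | cons g t ih =>
    have ht := ih fun x hx => h x (List.mem_cons_of_mem _ hx)
    have hg := h g List.mem_cons_self
    refine ⟨⟨?_, hg.1, ht.1⟩, ?_, hg.2, ht.2⟩
    · intro x _
      rw [rml_graftOmega]
      exact Fin.le_last x
    · exact rml_graftOmega t

lemma graftOmega_surj (t : LTree (Fin 2)) (hm : LTree.Mono t)
    (ha : LTree.AllRlm (· = (1 : Fin 2)) t) (hr : t.rml = 1) :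
    ∃ l : List (LTree (Fin 2)),
      (∀ g ∈ l, LTree.Mono g ∧ LTree.AllRlm (· = (1 : Fin 2)) g) ∧
      (l.map fun g => (LTree.leafList g).count (1 : Fin 2)).sum + 1
        = (t.leafList).count (1 : Fin 2) ∧ graftOmega l = t := by
  induction t with
  | leaf a =>
    refine ⟨[], by simp, ?_, ?_⟩
    · simp only [LTree.rml] at hr
      simp [LTree.leafList, hr]
    · simp only [LTree.rml] at hr
      simp [graftOmega, hr]
  | node l r ihl ihr =>
    obtain ⟨h1, h2, h3⟩ := ha
    obtain ⟨_, m2, m3⟩ := hm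
    obtain ⟨ls, hls, hsum, hgr⟩ := ihr m3 h3 h1
    refine ⟨l :: ls, ?_, ?_, ?_⟩
    · intro g hg
      rw [List.mem_cons] at hg
      rcases hg with rfl | hg
      · exact ⟨m2, h2⟩
      · exact hls g hg
    · simp only [List.map_cons, List.sum_cons, LTree.leafList, List.count_append]
      omega
    · simp [graftOmega, hgr]

/-- **Theorem.** For every `r ≥ 0`, grafting elements of `𝒞_{i₁} × ⋯ × 𝒞_{i_m}`
(`i₁ + ⋯ + i_m = r`) at the `b`-labelled leaves of `Ω_m` is a bijection onto `𝒞_{r+1}`.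
Here a list `l = [Γ₁, …, Γ_m]` encodes the choice of `m`, of the tuple
`(i₁, …, i_m) = ((count of a-leaves of Γ₁), …)` and of the trees themselves; `𝒞` is the
set of posetted binary trees over the chain `b < a` (= `Fin 2`, `0 = b`, `1 = a`) whose
local rightmost leaves are all labelled `a`, and `𝒞_s ⊆ 𝒞` is the subset of trees with
exactly `s` leaves labelled `a`. -/
theorem graftOmega_bijOn (r : ℕ) :
    Set.BijOn graftOmega
      {l : List (LTree (Fin 2)) |
        (∀ g ∈ l, LTree.Mono g ∧ LTree.AllRlm (· = (1 : Fin 2)) g) ∧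
        (l.map fun g => (LTree.leafList g).count (1 : Fin 2)).sum = r}
      {t : LTree (Fin 2) | (LTree.Mono t ∧ LTree.AllRlm (· = (1 : Fin 2)) t) ∧
        (LTree.leafList t).count (1 : Fin 2) = r + 1} := by
  refine ⟨?_, fun _ _ _ _ h => graftOmega_injective h, ?_⟩
  · rintro l ⟨h1, h2⟩
    exact ⟨good_graftOmega l h1, by rw [count_graftOmega, h2]⟩
  · rintro t ⟨⟨hm, ha⟩, hc⟩
    have hr : t.rml = 1 := by
      cases t with
      | leaf a =>
        simp only [LTree.leafList, List.count_singleton] at hc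
        simp only [LTree.rml]
        by_contra h
        simp [h] at hc
      | node l r => exact ha.1
    obtain ⟨l, hls, hsum, hgr⟩ := graftOmega_surj t hm ha hr
    exact ⟨l, ⟨hls, by omega⟩, hgr⟩
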